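/- arXiv:1605.07613 — 2 statements merged into one kernel-verified Lean document; each statement's English description precedes it below -/
import Mathlib

section
/- The 9-dimensional Hamming space {0,1}^9 can be partitioned into 14 pairwise disjoint nonempty sets C_1, …, C_14 whose union is all of {0,1}^9, such that each C_i is a binary code with minimum distance at least 3, i.e., any two distinct elements of the same C_i are at Hamming distance at least 3. -/
set_option maxRecDepth 100000
set_option maxHeartbeats 2000000

/-- Color table: base-16 digits of this number give a proper 14-coloring of the
square of the 9-cube (found by tabu search, verified by `decide`). -/
def colN : Nat := 3587726366025640830364934049868982262732771612228315605907688682283615483827465539027810171686139012754269588821574335347409112855657886592008976912405702663445591018880225782207197287025623240293843751902247916020335600352763162597493471187411056852502071106257528456018475730910325647661427591600345363814944538115355011011634598471519778628864654907586921232129739672872484344017711195724806843950582203725783327378919257351639395062417891589238902208200970963383403043894957645877242002444930234267318254552380363781530563414104626260491313325912351250159521855197892427793180715313452235510825285493329094558901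

/-- The color of the vertex encoded by `n`. -/
def col (n : Nat) : Nat := (colN >>> (4*n)) &&& 15

/-- Encodings of all 45 nonzero error vectors of Hamming weight ≤ 2. -/
def E45 : List Nat := [1, 2, 4, 8, 16, 32, 64, 128, 256, 3, 5, 9, 17, 33, 65, 129, 257, 6, 10, 18, 34, 66, 130, 258, 12, 20, 36, 68, 132, 260, 24, 40, 72, 136, 264, 48, 80, 144, 272, 96, 160, 288, 192, 320, 384]

/-- Witnesses: a vertex of each color. -/
def WL : List Nat := [4, 6, 13, 7, 2, 0, 8, 5, 11, 9, 12, 1, 3, 14]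

/-- Encode a bit vector as a natural number. -/
def enc (x : Fin 9 → Bool) : Nat :=
  (Finset.univ : Finset (Fin 9)).sum (fun i => if x i then 2^(i:Nat) else 0)

theorem check_true : ((List.range 512).all fun a => E45.all fun e =>
    decide (col a ≠ col (a ^^^ e))) = true := by decide

theorem L2 : ∀ x : Fin 9 → Bool, ∀ i : Fin 9, Nat.testBit (enc x) i.val = x i := by decide

theorem L1 : ∀ x : Fin 9 → Bool, enc x < 512 := by decide

theorem L3 : ((List.range 512).all fun a => decide (col a < 14)) = true := by decide

theorem P1 : ∀ z : Fin 9 → Bool, z ≠ (fun _ => false) →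
    hammingDist z (fun _ => false) ≤ 2 → enc z ∈ E45 := by decide

theorem LNE : ∀ i : Fin 14,
    col (enc (fun j : Fin 9 => Nat.testBit (WL.getD i.val 0) j.val)) = i.val := by decide

theorem col_lt : ∀ x : Fin 9 → Bool, col (enc x) < 14 := by
  intro x
  have h := List.all_eq_true.mp L3 (enc x) (List.mem_range.mpr (L1 x))
  exact of_decide_eq_true h

theorem encXor (x z : Fin 9 → Bool) :
    enc (fun j => xor (x j) (z j)) = enc x ^^^ enc z := by
  apply Nat.eq_of_testBit_eq
  intro i
  rcases lt_or_ge i 9 with h | h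
  · rw [Nat.testBit_xor]
    have h1 := L2 x ⟨i, h⟩
    have h2 := L2 z ⟨i, h⟩
    have h3 := L2 (fun j => xor (x j) (z j)) ⟨i, h⟩
    simp only at h1 h2 h3
    rw [h1, h2, h3]
  · have h9 : (512:Nat) ≤ 2^i := by
      calc (512:Nat) = 2^9 := by norm_num
      _ ≤ 2^i := Nat.pow_le_pow_right (by norm_num) h
    rw [Nat.testBit_lt_two_pow (lt_of_lt_of_le (L1 _) h9),
        Nat.testBit_xor,
        Nat.testBit_lt_two_pow (lt_of_lt_of_le (L1 x) h9),
        Nat.testBit_lt_two_pow (lt_of_lt_of_le (L1 z) h9)]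
    rfl

theorem main_sep : ∀ x y : Fin 9 → Bool, col (enc x) = col (enc y) → x ≠ y →
    3 ≤ hammingDist x y := by
  intro x y hc hxy
  by_contra hlt
  push_neg at hlt
  have hle : hammingDist x y ≤ 2 := Nat.lt_succ_iff.mp hlt
  set z : Fin 9 → Bool := fun j => xor (x j) (y j) with hz
  have hzne : z ≠ (fun _ => false) := by
    intro hzz
    apply hxy
    funext j
    have := congrFun hzz j
    simp only [hz] at this
    revert this; cases x j <;> cases y j <;> simp
  have hzd : hammingDist z (fun _ => false) = hammingDist x y := by
    unfold hammingDist
    apply congrArg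
    apply Finset.filter_congr
    intro j _
    simp only [hz]
    cases x j <;> cases y j <;> simp
  have hmem : enc z ∈ E45 := P1 z hzne (hzd ▸ hle)
  have hy : (fun j => xor (x j) (z j)) = y := by
    funext j; simp only [hz]; cases x j <;> cases y j <;> rfl
  have hxz : enc y = enc x ^^^ enc z := by rw [← hy, encXor]
  have hneq := List.all_eq_true.mp
    (List.all_eq_true.mp check_true (enc x) (List.mem_range.mpr (L1 x))) (enc z) hmem
  exact (of_decide_eq_true hneq) (hc.trans (congrArg col hxz))

/-- The Hamming space `{0,1}^9` can be partitioned into 14 pairwise disjoint nonempty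
sets whose union is everything, each of which is a binary code of minimum distance at
least 3 (any two distinct elements of the same set are at Hamming distance ≥ 3). -/
theorem partition_Q9_into_14_codes :
    ∃ C : Fin 14 → Set (Fin 9 → Bool),
      (∀ i, (C i).Nonempty) ∧
      (∀ i j, i ≠ j → Disjoint (C i) (C j)) ∧
      (⋃ i, C i) = Set.univ ∧
      (∀ i, ∀ x ∈ C i, ∀ y ∈ C i, x ≠ y → 3 ≤ hammingDist x y) := by
  refine ⟨fun i => {x | col (enc x) = i.val}, ?_, ?_, ?_, ?_⟩
  · intro i
    exact ⟨_, LNE i⟩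
  · intro i j hij
    rw [Set.disjoint_left]
    intro x hx hy
    exact hij (Fin.ext ((hx : col (enc x) = i.val).symm.trans hy))
  · ext x
    simp only [Set.mem_iUnion, Set.mem_univ, iff_true]
    exact ⟨⟨col (enc x), col_lt x⟩, rfl⟩
  · intro i x hx y hy hxy
    exact main_sep x y ((hx : _ = _).trans (hy : _ = _).symm) hxy
end

section
/- The chromatic number of the square of the 9-dimensional hypercube is at least 13; that is, for any proper coloring of Q_9^2 (any assignment of colors to bit strings of length 9 such that distinct strings at Hamming distance at most 2 receive different colors), at least 13 colors are used. -/
/-!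
Delsarte's linear programming bound. Each colour class of a proper colouring of `Q₉²` is a
binary code of length 9 and minimum distance 3. For nonnegative weights `a_u` and characters
`χ_u`, the kernel `K x y = ∑ u, a_u χ_u(x) χ_u(y)` is positive semidefinite, so for a code `C`
the sum of `K` over `C × C` is at least `a₀ |C|²`. With `a_u = (6,4,2,1,0,0,0,1,2,4)` depending
on the weight of `u`, the kernel equals `256` on the diagonal and is `≤ 0` at distance `≥ 3`,
so `6 |C|² ≤ 256 |C|`, i.e. `|C| ≤ 42`. Since `512 > 12 · 42`, at least 13 colours are needed.
-/

open Finset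

section Kernel

variable {X ι R : Type*} [Fintype ι]

theorem sum_sum_kernel_eq_sum_mul_sq [CommSemiring R] (a : ι → R) (χ : ι → X → R)
    (C : Finset X) :
    ∑ x ∈ C, ∑ y ∈ C, ∑ u, a u * χ u x * χ u y = ∑ u, a u * (∑ x ∈ C, χ u x) ^ 2 := by
  simp_rw [sq, sum_mul_sum, mul_sum, ← mul_assoc]
  exact (sum_congr rfl fun _ _ => sum_comm).trans sum_comm

theorem mul_card_le_sum_of_kernel_nonpos [CommRing R] [LinearOrder R] [IsStrictOrderedRing R]
    (a : ι → R) (ha : ∀ u, 0 ≤ a u) (χ : ι → X → R) (hχ : ∀ u x, χ u x ^ 2 ≤ 1)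
    {u₀ : ι} (hu₀ : ∀ x, χ u₀ x = 1) (C : Finset X)
    (hC : ∀ x ∈ C, ∀ y ∈ C, x ≠ y → ∑ u, a u * χ u x * χ u y ≤ 0) :
    a u₀ * #C ≤ ∑ u, a u := by
  classical
  have hlower : a u₀ * #C ^ 2 ≤ ∑ x ∈ C, ∑ y ∈ C, ∑ u, a u * χ u x * χ u y := by
    rw [sum_sum_kernel_eq_sum_mul_sq]
    calc a u₀ * #C ^ 2 = a u₀ * (∑ x ∈ C, χ u₀ x) ^ 2 := by simp [hu₀]
      _ ≤ _ := single_le_sum (f := fun u => a u * (∑ x ∈ C, χ u x) ^ 2)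
          (fun u _ => mul_nonneg (ha u) (sq_nonneg _)) (mem_univ u₀)
  have hrow : ∀ x ∈ C, ∑ y ∈ C, ∑ u, a u * χ u x * χ u y ≤ ∑ u, a u := by
    intro x hx
    rw [← add_sum_erase C _ hx]
    have hdiag : ∑ u, a u * χ u x * χ u x ≤ ∑ u, a u :=
      sum_le_sum fun u _ => by nlinarith [ha u, hχ u x]
    have hoff : ∑ y ∈ C.erase x, ∑ u, a u * χ u x * χ u y ≤ 0 :=
      sum_nonpos fun y hy => hC x hx y (mem_of_mem_erase hy) (ne_of_mem_erase hy).symm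
    linarith
  have hupper := sum_le_sum hrow
  rw [sum_const, nsmul_eq_mul] at hupper
  rcases (#C).eq_zero_or_pos with hempty | hpos
  · simpa [hempty] using sum_nonneg fun u _ => ha u
  · refine le_of_mul_le_mul_left ?_ (Nat.cast_pos.2 hpos : (0 : R) < #C)
    linarith

end Kernel

namespace Hypercube

section

variable {ι : Type*} [Fintype ι]

def walsh (u x : ι → Bool) : ℤ := ∏ i, if u i && x i then -1 else 1

def weight (u : ι → Bool) : ℕ := #{i | u i}

theorem walsh_false_left (x : ι → Bool) : walsh (fun _ => false) x = 1 := by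
  simp [walsh]

theorem walsh_mul_walsh (u x y : ι → Bool) :
    walsh u x * walsh u y = walsh u (fun i => x i ^^ y i) := by
  rw [walsh, walsh, walsh, ← prod_mul_distrib]
  refine prod_congr rfl fun i _ => ?_
  cases u i <;> cases x i <;> cases y i <;> rfl

theorem walsh_sq (u x : ι → Bool) : walsh u x ^ 2 = 1 := by
  rw [sq, walsh_mul_walsh]
  simp [walsh]

theorem walsh_comp_perm (u x : ι → Bool) (σ : Equiv.Perm ι) :
    walsh (u ∘ σ) (x ∘ σ) = walsh u x :=
  Fintype.prod_equiv σ _ _ fun _ => rfl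

theorem weight_comp_perm (u : ι → Bool) (σ : Equiv.Perm ι) : weight (u ∘ σ) = weight u :=
  card_equiv σ (by simp)

theorem hammingDist_eq_weight_xor (x y : ι → Bool) :
    hammingDist x y = weight (fun i => x i ^^ y i) := by
  simp [hammingDist, weight]

variable [DecidableEq ι]

/-- Equals `∑ k, a k * K_k (weight z)`, with `K_k` the Krawtchouk polynomials. -/
def krawtchoukSum (a : ℕ → ℤ) (z : ι → Bool) : ℤ := ∑ u, a (weight u) * walsh u z

theorem krawtchoukSum_comp_perm (a : ℕ → ℤ) (z : ι → Bool) (σ : Equiv.Perm ι) :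
    krawtchoukSum a (z ∘ σ) = krawtchoukSum a z :=
  (Fintype.sum_equiv (σ.symm.arrowCongr (.refl Bool)) _ _ fun u => by
    change _ = a (weight (u ∘ σ)) * walsh (u ∘ σ) (z ∘ σ)
    rw [weight_comp_perm, walsh_comp_perm]).symm

theorem krawtchoukSum_eq_of_weight_eq (a : ℕ → ℤ) {z z' : ι → Bool}
    (h : weight z = weight z') : krawtchoukSum a z = krawtchoukSum a z' := by
  classical
  obtain ⟨σ, hσ⟩ := Equiv.Perm.exists_map_finset_eq {i | z' i} {i | z i} h.symm
  have : z' = z ∘ σ := funext fun i => by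
    have := congrArg (σ i ∈ ·) hσ
    simp only [mem_map_equiv, Equiv.symm_apply_apply, mem_filter, mem_univ, true_and,
      eq_iff_iff] at this
    exact Bool.eq_iff_iff.2 this
  rw [this, krawtchoukSum_comp_perm]

end

theorem weight_fin_val_lt (n w : ℕ) :
    weight (fun i : Fin n => decide (i.val < w)) = min n w := by
  simp only [weight, decide_eq_true_eq]
  exact Fin.card_filter_val_lt

def delsarteCoeff : ℕ → ℤ
  | 0 => 6 | 1 => 4 | 2 => 2 | 3 => 1 | 7 => 1 | 8 => 2 | 9 => 4 | _ => 0

theorem delsarteCoeff_nonneg (k : ℕ) : 0 ≤ delsarteCoeff k := by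
  unfold delsarteCoeff
  split <;> norm_num

set_option maxRecDepth 100000 in
theorem krawtchoukSum_delsarteCoeff_fin_lt_nonpos (w : ℕ) (h3 : 3 ≤ w) (h9 : w ≤ 9) :
    krawtchoukSum delsarteCoeff (fun i : Fin 9 => decide (i.val < w)) ≤ 0 := by
  interval_cases w <;> decide

theorem krawtchoukSum_delsarteCoeff_nonpos (z : Fin 9 → Bool) (hz : 3 ≤ weight z) :
    krawtchoukSum delsarteCoeff z ≤ 0 := by
  have hw : weight z ≤ 9 := (card_filter_le _ _).trans_eq (by simp)
  rw [krawtchoukSum_eq_of_weight_eq delsarteCoeff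
    (z' := fun i : Fin 9 => decide (i.val < weight z)) (by rw [weight_fin_val_lt, min_eq_right hw])]
  exact krawtchoukSum_delsarteCoeff_fin_lt_nonpos _ hz hw

set_option maxRecDepth 100000 in
theorem sum_delsarteCoeff_weight : ∑ u : Fin 9 → Bool, delsarteCoeff (weight u) = 256 := by
  decide

theorem card_le_42_of_three_le_hammingDist (C : Finset (Fin 9 → Bool))
    (hC : ∀ x ∈ C, ∀ y ∈ C, x ≠ y → 3 ≤ hammingDist x y) : #C ≤ 42 := by
  have h := mul_card_le_sum_of_kernel_nonpos (fun u => delsarteCoeff (weight u))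
    (fun _ => delsarteCoeff_nonneg _) walsh (fun u x => (walsh_sq u x).le)
    (u₀ := fun _ => false) walsh_false_left C fun x hx y hy hxy => by
      simp_rw [mul_assoc, walsh_mul_walsh]
      exact krawtchoukSum_delsarteCoeff_nonpos _
        (hammingDist_eq_weight_xor x y ▸ hC x hx y hy hxy)
  rw [sum_delsarteCoeff_weight] at h
  simp only [delsarteCoeff, weight, Bool.false_eq_true, filter_false, card_empty] at h
  omega

end Hypercube

/-- The chromatic number of the square of the 9-dimensional hypercube is at least 13:
any coloring of the bit strings of length 9 in which distinct strings at Hamming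
distance at most 2 receive different colors uses at least 13 colors. -/
theorem chromatic_number_square_Q9_ge_13 :
    ∀ {α : Type} [DecidableEq α] (c : (Fin 9 → Bool) → α),
      (∀ x y : Fin 9 → Bool, x ≠ y → hammingDist x y ≤ 2 → c x ≠ c y) →
      13 ≤ (Finset.univ.image c).card := by
  intro α _ c hc
  have hclass : ∀ a ∈ univ.image c, #{x | c x = a} ≤ 42 := fun a _ =>
    Hypercube.card_le_42_of_three_le_hammingDist _ fun x hx y hy hxy => by
      by_contra! h
      exact hc x y hxy (by omega) ((mem_filter.1 hx).2.trans (mem_filter.1 hy).2.symm)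
  have hcover := card_le_mul_card_image univ 42 hclass
  simp only [card_univ, Fintype.card_fun, Fintype.card_bool, Fintype.card_fin] at hcover
  omega
end
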